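/- arXiv:1708.00046 — 6 statements merged into one kernel-verified Lean document; each statement's English description precedes it below -/
import Mathlib

section
/- With notation as above, for any integers a and b, πᵃL ∩ π⁻ᵃM ⊆ πᵇL + π⁻ᵇM. -/
open scoped Pointwise

variable {R K V : Type*} [CommRing R] [IsDomain R] [IsDiscreteValuationRing R]
  [Field K] [Algebra R K] [IsFractionRing R K]
  [AddCommGroup V] [Module K V] [Module R V] [IsScalarTower R K V]
  [FiniteDimensional K V]

/-- A lattice in `V` is a finitely generated `R`-submodule spanning `V` over `K`. -/
def IsLattice (K : Type*) [Field K] [Algebra R K] [Module K V] (L : Submodule R V) : Prop :=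
  L.FG ∧ Submodule.span K (L : Set V) = ⊤

/-- `πⁿ L`, for `n ∈ ℤ` (via the embedding of `π` in `K`). -/
noncomputable def latTwist (π : R) (n : ℤ) (L : Submodule R V) : Submodule R V :=
  ((algebraMap R K π) ^ n) • L

/-- The lower middle `m₋(L,M) = ∑ₙ (πⁿL ∩ π⁻ⁿM)`. -/
noncomputable def lowerMiddle (π : R) (L M : Submodule R V) : Submodule R V :=
  ⨆ n : ℤ, (latTwist (K := K) π n L ⊓ latTwist (K := K) π (-n) M)

/-- The upper middle `m₊(L,M) = ⋂ₙ (πⁿL + π⁻ⁿM)`. -/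
noncomputable def upperMiddle (π : R) (L M : Submodule R V) : Submodule R V :=
  ⨅ n : ℤ, (latTwist (K := K) π n L ⊔ latTwist (K := K) π (-n) M)

theorem Submodule.algebraMap_smul_le_self {R A M : Type*} [CommSemiring R] [CommSemiring A]
    [Algebra R A] [AddCommMonoid M] [Module A M] [Module R M] [IsScalarTower R A M]
    (r : R) (N : Submodule R M) : algebraMap R A r • N ≤ N := by
  rintro _ ⟨x, hx, rfl⟩
  rw [DistribSMul.toLinearMap_apply, algebraMap_smul]
  exact N.smul_mem r hx

theorem latTwist_antitone {R K V : Type*} [CommRing R] [Field K] [Algebra R K]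
    [IsFractionRing R K] [AddCommGroup V] [Module K V] [Module R V] [IsScalarTower R K V]
    (π : R) (hπ : π ≠ 0) (L : Submodule R V) :
    Antitone fun n : ℤ => latTwist (K := K) π n L := by
  intro m n hmn
  obtain ⟨k, rfl⟩ := Int.exists_add_of_le hmn
  have hπK : algebraMap R K π ≠ 0 := (map_ne_zero_iff _ (IsFractionRing.injective R K)).2 hπ
  calc latTwist (K := K) π (m + k) L = algebraMap R K (π ^ k) • latTwist (K := K) π m L := by
        rw [latTwist, latTwist, zpow_add₀ hπK, mul_comm, mul_smul, map_pow, zpow_natCast]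
    _ ≤ latTwist (K := K) π m L := Submodule.algebraMap_smul_le_self _ _

theorem twist_inf_le_twist_sup_general (π : R) (hπ : Irreducible π)
    (L M : Submodule R V) (a b : ℤ) :
    latTwist (K := K) π a L ⊓ latTwist (K := K) π (-a) M ≤
      latTwist (K := K) π b L ⊔ latTwist (K := K) π (-b) M := by
  rcases le_total b a with hba | hab
  · exact inf_le_left.trans <| (latTwist_antitone π hπ.ne_zero L hba).trans le_sup_left
  · exact inf_le_right.trans <|
      (latTwist_antitone π hπ.ne_zero M (neg_le_neg hab)).trans le_sup_right

/-- For any integers `a, b`: `πᵃL ∩ π⁻ᵃM ⊆ πᵇL + π⁻ᵇM`. -/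
theorem twist_inf_le_twist_sup (π : R) (hπ : Irreducible π)
    (L M : Submodule R V) (hL : IsLattice K L) (hM : IsLattice K M) (a b : ℤ) :
    latTwist (K := K) π a L ⊓ latTwist (K := K) π (-a) M ≤
      latTwist (K := K) π b L ⊔ latTwist (K := K) π (-b) M :=
  twist_inf_le_twist_sup_general π hπ L M a b
end

section
/- Given two lattices L and M of a finite-dimensional K-vector space V over the fraction field K of a DVR R, there exists a decomposition V = ⊕ᵢ Vᵢ into one-dimensional subspaces such that L = ⊕ᵢ (L ∩ Vᵢ) and M = ⊕ᵢ (M ∩ Vᵢ). -/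
/-!
Since `M` is finitely generated and `L` spans `V`, some `r ≠ 0` in `R` has `r • M ⊆ L`. Over the
PID `R` the lattice `L` is free, and the Smith normal form of `r • M ⊆ L` gives an `R`-basis
`(bᵢ)` of `L` such that `r • M` is spanned by multiples of the `bᵢ`. The `bᵢ` form a `K`-basis of
`V`, and the lines `K ∙ bᵢ` split `L`, `r • M`, and hence also `M = r⁻¹ • (r • M)`, because
scaling by `r⁻¹` fixes every `K`-line.
-/

open Module
open scoped nonZeroDivisors

theorem eq_iSup_inf_of_forall_exists_le {α ι κ : Type*} [CompleteLattice α] {a : α}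
    {f : ι → α} {g : κ → α} (ha : a = ⨆ i, a ⊓ f i) (hfg : ∀ i, ∃ j, f i ≤ g j) :
    a = ⨆ j, a ⊓ g j := by
  refine le_antisymm (ha.le.trans (iSup_le fun i => ?_)) (iSup_le fun _ => inf_le_left)
  obtain ⟨j, hj⟩ := hfg i
  exact (inf_le_inf_left a hj).trans (le_iSup (fun j => a ⊓ g j) j)

namespace Submodule

section Semiring

variable {R V V₂ ι : Type*} [Semiring R] [AddCommMonoid V] [Module R V] [AddCommMonoid V₂]
  [Module R V₂]

theorem span_eq_iSup_inf {s : Set V} {W : ι → Submodule R V} (hs : ∀ x ∈ s, ∃ i, x ∈ W i) :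
    span R s = ⨆ i, span R s ⊓ W i := by
  refine le_antisymm (span_le.2 fun x hx => ?_) (iSup_le fun _ => inf_le_left)
  obtain ⟨i, hi⟩ := hs x hx
  exact mem_iSup_of_mem i ⟨subset_span hx, hi⟩

theorem map_eq_iSup_inf_map_iff (e : V ≃ₗ[R] V₂) {P : Submodule R V} {W : ι → Submodule R V}
    {W₂ : ι → Submodule R V₂} (hW : ∀ i, (W i).map (e : V →ₗ[R] V₂) = W₂ i) :
    P.map (e : V →ₗ[R] V₂) = ⨆ i, P.map (e : V →ₗ[R] V₂) ⊓ W₂ i ↔ P = ⨆ i, P ⊓ W i := by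
  rw [← (map_injective_of_injective e.injective).eq_iff, map_iSup]
  simp only [map_inf _ e.injective, hW]

end Semiring

theorem map_restrictScalars_smulOfNeZero {R K V : Type*} [CommSemiring R] [Field K] [Algebra R K]
    [AddCommGroup V] [Module K V] [Module R V] [IsScalarTower R K V] (W : Submodule K V) {u : K}
    (hu : u ≠ 0) :
    (W.restrictScalars R).map ((LinearEquiv.smulOfNeZero K V u hu).restrictScalars R : V →ₗ[R] V) =
      W.restrictScalars R := by
  ext x
  refine ⟨?_, fun hx => ⟨u⁻¹ • x, W.smul_mem _ hx, smul_inv_smul₀ hu x⟩⟩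
  rintro ⟨y, hy, rfl⟩
  exact W.smul_mem u hy

end Submodule

namespace Module.Basis

variable {R V ι : Type*} [Semiring R] [AddCommMonoid V] [Module R V] {P : Submodule R V}

theorem span_range_coe (b : Basis ι R P) : Submodule.span R (Set.range fun i => (b i : V)) = P := by
  rw [show (fun i => (b i : V)) = P.subtype ∘ b from rfl, Set.range_comp, ← Submodule.map_span,
    b.span_eq, Submodule.map_top, Submodule.range_subtype]

theorem eq_iSup_inf_span_singleton (b : Basis ι R P) : P = ⨆ i, P ⊓ R ∙ (b i : V) := by
  have := Submodule.span_eq_iSup_inf (s := Set.range fun i => (b i : V))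
    (W := fun i => R ∙ (b i : V))
    (by rintro _ ⟨i, rfl⟩; exact ⟨i, Submodule.mem_span_singleton_self _⟩)
  rwa [b.span_range_coe] at this

theorem isInternal_span_singleton {R V ι : Type*} [Ring R] [AddCommGroup V] [Module R V]
    [DecidableEq ι] (b : Basis ι R V) : DirectSum.IsInternal fun i => R ∙ b i := by
  rw [DirectSum.isInternal_submodule_iff_iSupIndep_and_iSup_eq_top,
    ← Submodule.span_range_eq_iSup]
  exact ⟨b.linearIndependent.iSupIndep_span_singleton, b.span_eq⟩

end Module.Basis

namespace Submodule

theorem exists_basis_eq_iSup_inf_span_singleton {R V ι : Type*} [CommRing R] [IsDomain R]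
    [IsPrincipalIdealRing R] [AddCommGroup V] [Module R V] [Finite ι] {L N : Submodule R V}
    (hNL : N ≤ L) (b : Basis ι R L) : ∃ b' : Basis ι R L, N = ⨆ i, N ⊓ R ∙ (b' i : V) := by
  obtain ⟨n, snf⟩ := (N.comap L.subtype).smithNormalForm b
  let bN : Basis (Fin n) R N := snf.bN.map (comapSubtypeEquivOfLe hNL)
  refine ⟨snf.bM, ?_⟩
  have := span_eq_iSup_inf (s := Set.range fun j => (bN j : V)) (W := fun i => R ∙ (snf.bM i : V))
    (by rintro _ ⟨j, rfl⟩; exact ⟨snf.f j, mem_span_singleton.2 ⟨snf.a j, by simp [bN, snf.snf]⟩⟩)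
  rwa [bN.span_range_coe] at this

section FractionRing

variable {R K V : Type*} [CommRing R] [Field K] [Algebra R K] [IsFractionRing R K]
  [AddCommGroup V] [Module K V] [Module R V] [IsScalarTower R K V]

theorem exists_smul_mem_of_mem_span {L : Submodule R V} {x : V} (hx : x ∈ span K (L : Set V)) :
    ∃ r : R⁰, (r : R) • x ∈ L := by
  induction hx using span_induction with
  | mem y hy => exact ⟨1, by simpa using hy⟩
  | zero => exact ⟨1, by simp⟩
  | add y z _ _ hy hz =>
    obtain ⟨r, hr⟩ := hy
    obtain ⟨s, hs⟩ := hz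
    refine ⟨r * s, ?_⟩
    rw [Submonoid.coe_mul, smul_add, mul_smul, mul_smul, smul_comm (r : R) (s : R) y]
    exact L.add_mem (L.smul_mem _ hr) (L.smul_mem _ hs)
  | smul c y _ hy =>
    obtain ⟨r, hr⟩ := hy
    obtain ⟨⟨p, s⟩, hps⟩ := IsLocalization.surj R⁰ c
    refine ⟨s * r, ?_⟩
    have : ((s * r : R⁰) : R) • c • y = p • (r : R) • y := by
      rw [Submonoid.coe_mul, mul_smul, smul_comm (r : R) c, ← algebraMap_smul K (s : R), smul_smul,
        mul_comm, hps, algebraMap_smul]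
    rw [this]
    exact L.smul_mem p hr

theorem exists_smul_mem_of_fg {L M : Submodule R V} (hL : span K (L : Set V) = ⊤) (hM : M.FG) :
    ∃ r : R⁰, ∀ x ∈ M, (r : R) • x ∈ L := by
  classical
  obtain ⟨S, rfl⟩ := hM
  choose f hf using fun x : V =>
    exists_smul_mem_of_mem_span (K := K) (L := L) (hL ▸ mem_top (x := x))
  refine ⟨∏ s ∈ S, f s, fun x hx => span_le (p := L.comap (LinearMap.lsmul R V _)).2 ?_ hx⟩
  intro s hs
  rw [SetLike.mem_coe, mem_comap, LinearMap.lsmul_apply, ← Finset.mul_prod_erase S f hs,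
    Submonoid.coe_mul, mul_comm, mul_smul]
  exact L.smul_mem _ (hf s)

end FractionRing

end Submodule

variable {R K V : Type*} [CommRing R] [IsDomain R] [IsDiscreteValuationRing R]
  [Field K] [Algebra R K] [IsFractionRing R K]
  [AddCommGroup V] [Module K V] [Module R V] [IsScalarTower R K V]
  [FiniteDimensional K V]

/-- Given two lattices `L, M` of `V`, there is a decomposition `V = ⊕ᵢ Vᵢ` into
one-dimensional subspaces which is compatible with both `L` and `M`, i.e.
`L = ⊕ᵢ (L ∩ Vᵢ)` and `M = ⊕ᵢ (M ∩ Vᵢ)`. -/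
theorem exists_common_splitting (L M : Submodule R V)
    (hL : IsLattice K L) (hM : IsLattice K M) :
    ∃ W : Fin (Module.finrank K V) → Submodule K V,
      DirectSum.IsInternal W ∧
      (∀ i, Module.finrank K (W i) = 1) ∧
      L = ⨆ i, (L ⊓ (W i).restrictScalars R) ∧
      M = ⨆ i, (M ⊓ (W i).restrictScalars R) := by
  -- Mathlib's `Submodule.IsLattice` makes `L` free and provides `Basis.extendOfIsLattice`.
  have : L.IsLattice K := ⟨hL.1, hL.2⟩
  obtain ⟨r, hrM⟩ := Submodule.exists_smul_mem_of_fg hL.2 hM.1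
  have hu : algebraMap R K r ≠ 0 := IsFractionRing.to_map_ne_zero_of_mem_nonZeroDivisors r.2
  let g : V ≃ₗ[R] V := (LinearEquiv.smulOfNeZero K V _ hu).restrictScalars R
  have hgM : M.map (g : V →ₗ[R] V) ≤ L := by
    rintro _ ⟨x, hx, rfl⟩
    simpa [g] using hrM x hx
  obtain ⟨b, hb⟩ := Submodule.exists_basis_eq_iSup_inf_span_singleton hgM (Free.chooseBasis R L)
  let bV := b.extendOfIsLattice K
  let e := bV.indexEquiv (finBasis K V)
  let bF := bV.reindex e
  have hlines : ∀ i, ∃ j, R ∙ (b i : V) ≤ (K ∙ bF j).restrictScalars R := fun i =>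
    ⟨e i, by
      rw [show bF (e i) = b i by simp [bF, bV]]
      exact Submodule.span_le_restrictScalars R K _⟩
  refine ⟨fun j => K ∙ bF j, bF.isInternal_span_singleton,
    fun j => finrank_span_singleton (bF.ne_zero j),
    eq_iSup_inf_of_forall_exists_le b.eq_iSup_inf_span_singleton hlines, ?_⟩
  exact (Submodule.map_eq_iSup_inf_map_iff g
    fun j => Submodule.map_restrictScalars_smulOfNeZero _ hu).1
    (eq_iSup_inf_of_forall_exists_le hb hlines)
end

section
/- For any two lattices L and M of V, m₊(L,M) = m₊(L+M, L∩M) and m₋(L,M) = m₋(L+M, L∩M). -/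
/-!
Multiplication by `πⁿ` is a lattice automorphism of the `R`-submodules of `V`, decreasing in `n`.
For `n ≥ 0` put `A = πⁿL ≤ A' = π⁻ⁿL` and `B = πⁿM ≤ B' = π⁻ⁿM`. The modular law gives
`(A + B') ∩ (A' + B) = (A + B) + (A' ∩ B')` and `(A ∩ B') + (A' ∩ B) = (A + B) ∩ (A' ∩ B')`, so pairing
the terms of index `n` and `-n` of `m₊(L,M)` (resp. `m₋(L,M)`) yields exactly the term of index `n`
of `m₊(L+M, L∩M)` (resp. `m₋(L+M, L∩M)`), whose terms of negative index are redundant.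
-/

open scoped Pointwise

variable {R K V : Type*} [CommRing R] [IsDomain R] [IsDiscreteValuationRing R]
  [Field K] [Algebra R K] [IsFractionRing R K]
  [AddCommGroup V] [Module K V] [Module R V] [IsScalarTower R K V]
  [FiniteDimensional K V]

section ModularLattice

variable {α : Type*} [Lattice α] [IsModularLattice α] {a a' b b' : α}

theorem sup_inf_sup_eq_of_le_of_le (ha : a ≤ a') (hb : b ≤ b') :
    (a ⊔ b') ⊓ (a' ⊔ b) = a ⊔ b ⊔ a' ⊓ b' :=
  calc (a ⊔ b') ⊓ (a' ⊔ b) = a ⊔ b' ⊓ (a' ⊔ b) := sup_inf_assoc_of_le _ (ha.trans le_sup_left)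
    _ = a ⊔ (b ⊔ a' ⊓ b') := by rw [inf_comm, sup_comm a', sup_inf_assoc_of_le _ hb]
    _ = a ⊔ b ⊔ a' ⊓ b' := (sup_assoc _ _ _).symm

theorem inf_sup_inf_eq_of_le_of_le (ha : a ≤ a') (hb : b ≤ b') :
    a ⊓ b' ⊔ a' ⊓ b = (a ⊔ b) ⊓ (a' ⊓ b') :=
  calc a ⊓ b' ⊔ a' ⊓ b = b' ⊓ (a ⊔ a' ⊓ b) := by
        rw [inf_comm a, inf_sup_assoc_of_le _ (inf_le_right.trans hb)]
    _ = b' ⊓ ((a ⊔ b) ⊓ a') := by rw [sup_inf_assoc_of_le _ ha, inf_comm a']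
    _ = (a ⊔ b) ⊓ (a' ⊓ b') := by rw [inf_comm, inf_assoc]

end ModularLattice

section CompleteLattice

variable {α : Type*} [CompleteLattice α] {f g : ℤ → α}

theorem iInf_eq_iInf_of_inf_neg_eq (hfg : ∀ n, 0 ≤ n → f n ⊓ f (-n) = g n)
    (hg : ∀ n, 0 ≤ n → g n ≤ g (-n)) : ⨅ n, f n = ⨅ n, g n := by
  have hf_le : ∀ n, 0 ≤ n → ⨅ k, f k ≤ g n := fun n hn =>
    hfg n hn ▸ le_inf (iInf_le f n) (iInf_le f (-n))
  refine le_antisymm (le_iInf fun n => ?_) (le_iInf fun n => ?_)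
  · rcases le_total 0 n with hn | hn
    · exact hf_le n hn
    · simpa using (hf_le (-n) (by omega)).trans (hg (-n) (by omega))
  · rcases le_total 0 n with hn | hn
    · exact (iInf_le g n).trans (hfg n hn ▸ inf_le_left)
    · calc ⨅ k, g k ≤ g (-n) := iInf_le g (-n)
        _ = f (-n) ⊓ f n := by rw [← hfg (-n) (by omega), neg_neg]
        _ ≤ f n := inf_le_right

theorem iSup_eq_iSup_of_sup_neg_eq (hfg : ∀ n, 0 ≤ n → f n ⊔ f (-n) = g n)
    (hg : ∀ n, 0 ≤ n → g (-n) ≤ g n) : ⨆ n, f n = ⨆ n, g n :=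
  iInf_eq_iInf_of_inf_neg_eq (α := αᵒᵈ) hfg hg

end CompleteLattice

section latTwist

variable {R K V : Type*} [CommRing R] [Field K] [Algebra R K]
  [AddCommGroup V] [Module K V] [Module R V] [IsScalarTower R K V] {π : R}

theorem mem_latTwist (hπ : algebraMap R K π ≠ 0) {n : ℤ} {L : Submodule R V} {x : V} :
    x ∈ latTwist (K := K) π n L ↔ (algebraMap R K π ^ (-n)) • x ∈ L := by
  rw [latTwist, ← SetLike.mem_coe, Submodule.coe_pointwise_smul,
    Set.mem_smul_set_iff_inv_smul_mem₀ (zpow_ne_zero _ hπ), ← zpow_neg, SetLike.mem_coe]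

theorem latTwist_mono (hπ : algebraMap R K π ≠ 0) (n : ℤ) :
    Monotone (latTwist (K := K) (V := V) π n) := fun _ _ hLM _ hx =>
  mem_latTwist hπ |>.mpr (hLM (mem_latTwist hπ |>.mp hx))

theorem latTwist_antitone_s13 (hπ : algebraMap R K π ≠ 0) (L : Submodule R V) :
    Antitone (latTwist (K := K) π · L) := by
  intro m n hmn x hx
  rw [mem_latTwist hπ] at hx ⊢
  obtain ⟨k, hk⟩ := Int.eq_ofNat_of_zero_le (sub_nonneg.mpr hmn)
  have hsplit : algebraMap R K π ^ (-m) • x = π ^ k • algebraMap R K π ^ (-n) • x := by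
    rw [← algebraMap_smul K (π ^ k), map_pow, smul_smul, ← zpow_natCast, ← hk,
      ← zpow_add₀ hπ, show n - m + -n = -m by ring]
  exact hsplit ▸ L.smul_mem _ hx

theorem latTwist_sup (n : ℤ) (L M : Submodule R V) :
    latTwist (K := K) π n (L ⊔ M) = latTwist (K := K) π n L ⊔ latTwist (K := K) π n M :=
  Submodule.smul_sup' _ _ _

theorem latTwist_inf (hπ : algebraMap R K π ≠ 0) (n : ℤ) (L M : Submodule R V) :
    latTwist (K := K) π n (L ⊓ M) = latTwist (K := K) π n L ⊓ latTwist (K := K) π n M := by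
  ext x
  simp only [mem_latTwist hπ, Submodule.mem_inf]


theorem latTwist_sup_inf_latTwist_sup (hπ : algebraMap R K π ≠ 0) {n : ℤ} (hn : 0 ≤ n)
    (L M : Submodule R V) :
    (latTwist (K := K) π n L ⊔ latTwist (K := K) π (-n) M) ⊓
        (latTwist (K := K) π (-n) L ⊔ latTwist (K := K) π n M) =
      latTwist (K := K) π n (L ⊔ M) ⊔ latTwist (K := K) π (-n) (L ⊓ M) := by
  rw [latTwist_sup, latTwist_inf hπ]
  exact sup_inf_sup_eq_of_le_of_le (latTwist_antitone_s13 hπ L (by omega))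
    (latTwist_antitone_s13 hπ M (by omega))

theorem latTwist_inf_sup_latTwist_inf (hπ : algebraMap R K π ≠ 0) {n : ℤ} (hn : 0 ≤ n)
    (L M : Submodule R V) :
    latTwist (K := K) π n L ⊓ latTwist (K := K) π (-n) M ⊔
        latTwist (K := K) π (-n) L ⊓ latTwist (K := K) π n M =
      latTwist (K := K) π n (L ⊔ M) ⊓ latTwist (K := K) π (-n) (L ⊓ M) := by
  rw [latTwist_sup, latTwist_inf hπ]
  exact inf_sup_inf_eq_of_le_of_le (latTwist_antitone_s13 hπ L (by omega))
    (latTwist_antitone_s13 hπ M (by omega))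

theorem latTwist_sup_sup_latTwist_inf_le (hπ : algebraMap R K π ≠ 0) {n : ℤ} (hn : 0 ≤ n)
    (L M : Submodule R V) :
    latTwist (K := K) π n (L ⊔ M) ⊔ latTwist (K := K) π (-n) (L ⊓ M) ≤
      latTwist (K := K) π (-n) (L ⊔ M) ⊔ latTwist (K := K) π n (L ⊓ M) :=
  le_sup_of_le_left <| sup_le (latTwist_antitone_s13 hπ _ (by omega))
    (latTwist_mono hπ _ inf_le_sup)

theorem latTwist_sup_inf_latTwist_inf_le (hπ : algebraMap R K π ≠ 0) {n : ℤ} (hn : 0 ≤ n)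
    (L M : Submodule R V) :
    latTwist (K := K) π (-n) (L ⊔ M) ⊓ latTwist (K := K) π n (L ⊓ M) ≤
      latTwist (K := K) π n (L ⊔ M) ⊓ latTwist (K := K) π (-n) (L ⊓ M) :=
  inf_le_of_right_le <| le_inf (latTwist_mono hπ _ inf_le_sup)
    (latTwist_antitone_s13 hπ _ (by omega))

end latTwist

theorem middle_of_sup_inf_general (π : R) (hπ : Irreducible π)
    (L M : Submodule R V) :
    upperMiddle (K := K) π L M = upperMiddle (K := K) π (L ⊔ M) (L ⊓ M) ∧
    lowerMiddle (K := K) π L M = lowerMiddle (K := K) π (L ⊔ M) (L ⊓ M) := by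
  have hπK : algebraMap R K π ≠ 0 :=
    (map_ne_zero_iff _ (IsFractionRing.injective R K)).mpr hπ.ne_zero
  constructor
  · refine iInf_eq_iInf_of_inf_neg_eq (fun n hn => ?_) (fun n hn => ?_)
    · simpa only [neg_neg] using latTwist_sup_inf_latTwist_sup hπK hn L M
    · simpa only [neg_neg] using latTwist_sup_sup_latTwist_inf_le hπK hn L M
  · refine iSup_eq_iSup_of_sup_neg_eq (fun n hn => ?_) (fun n hn => ?_)
    · simpa only [neg_neg] using latTwist_inf_sup_latTwist_inf hπK hn L M
    · simpa only [neg_neg] using latTwist_sup_inf_latTwist_inf_le hπK hn L M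

/-- `m₊(L,M) = m₊(L+M, L∩M)` and `m₋(L,M) = m₋(L+M, L∩M)`. -/
theorem middle_of_sup_inf (π : R) (hπ : Irreducible π)
    (L M : Submodule R V) (hL : IsLattice K L) (hM : IsLattice K M) :
    upperMiddle (K := K) π L M = upperMiddle (K := K) π (L ⊔ M) (L ⊓ M) ∧
    lowerMiddle (K := K) π L M = lowerMiddle (K := K) π (L ⊔ M) (L ⊓ M) :=
  middle_of_sup_inf_general π hπ L M
end

section
/- Let T be an R-module with πᴺT = 0 for some N ≥ 1. Define m₋(T) = ∑_{n≥0}(Im πⁿ ∩ Ker πⁿ) and m₊(T) = ⋂_{n≥0}(Im πⁿ + Ker πⁿ), where π acts as multiplication on T. Then π·m₊(T) ⊆ m₋(T) ⊆ m₊(T). -/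
open scoped Pointwise

/-!
For a nilpotent endomorphism `f`, write `x ∈ m₊` as `x = fⁿ yₙ + zₙ` with `fⁿ zₙ = 0`, for every
`n`. Consecutive error terms differ by `zₙ₊₁ - zₙ = fⁿ yₙ - fⁿ⁺¹ yₙ₊₁`, so `f (zₙ₊₁ - zₙ)` lies in
`Im fⁿ ∩ Ker fⁿ`; telescoping from `z₀ = 0` puts every `f zₙ` in `m₋`. Once `fᴺ = 0` one may take
`z_N = x`, whence `f x ∈ m₋`. The inclusion `m₋ ⊆ m₊` holds because images of powers decrease while
kernels increase.
-/

namespace Module.End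

variable {R M : Type*} [Ring R] [AddCommGroup M] [Module R M] (f : Module.End R M)

def lowerMiddle : Submodule R M :=
  ⨆ n : ℕ, LinearMap.range (f ^ n) ⊓ LinearMap.ker (f ^ n)

def upperMiddle : Submodule R M :=
  ⨅ n : ℕ, LinearMap.range (f ^ n) ⊔ LinearMap.ker (f ^ n)

theorem antitone_range_pow : Antitone fun n : ℕ ↦ LinearMap.range (f ^ n) :=
  fun _ _ h ↦ f.iterateRange.monotone h

theorem lowerMiddle_le_upperMiddle : f.lowerMiddle ≤ f.upperMiddle := by
  refine iSup_le fun n ↦ le_iInf fun m ↦ ?_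
  rcases le_total m n with h | h
  · exact inf_le_left.trans <| (f.antitone_range_pow h).trans le_sup_left
  · exact inf_le_right.trans <| (f.iterateKer.monotone h).trans le_sup_right

theorem apply_sub_mem_range_pow_inf_ker_pow {x z z' : M} {n : ℕ}
    (hz : z ∈ LinearMap.ker (f ^ n)) (hxz : x - z ∈ LinearMap.range (f ^ n))
    (hz' : z' ∈ LinearMap.ker (f ^ (n + 1))) (hxz' : x - z' ∈ LinearMap.range (f ^ (n + 1))) :
    f (z' - z) ∈ LinearMap.range (f ^ n) ⊓ LinearMap.ker (f ^ n) := by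
  refine Submodule.mem_inf.mpr ⟨?_, ?_⟩
  · have hdiff : z' - z ∈ LinearMap.range (f ^ n) := by
      rw [← sub_sub_sub_cancel_left z z' x]
      exact sub_mem hxz (f.antitone_range_pow n.le_succ hxz')
    obtain ⟨y, hy⟩ := hdiff
    exact f.antitone_range_pow n.le_succ ⟨y, by rw [pow_succ', Module.End.mul_apply, hy]⟩
  · rw [LinearMap.mem_ker] at hz hz' ⊢
    rw [← Module.End.mul_apply, ← pow_succ, map_sub, hz', pow_succ', Module.End.mul_apply, hz,
      map_zero, sub_zero]

theorem apply_mem_lowerMiddle_of_mem_upperMiddle {x : M} (hx : x ∈ f.upperMiddle) (n : ℕ) :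
    ∀ z ∈ LinearMap.ker (f ^ n), x - z ∈ LinearMap.range (f ^ n) → f z ∈ f.lowerMiddle := by
  induction n with
  | zero =>
    intro z hz _
    rw [LinearMap.mem_ker, pow_zero, Module.End.one_apply] at hz
    simp [hz]
  | succ n ih =>
    intro z' hz' hxz'
    obtain ⟨-, ⟨y, rfl⟩, z, hz, hyz⟩ := Submodule.mem_sup.mp (Submodule.mem_iInf _ |>.mp hx n)
    have hxz : x - z ∈ LinearMap.range (f ^ n) := ⟨y, by rw [← hyz, add_sub_cancel_right]⟩
    rw [← add_sub_cancel z z', map_add]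
    exact add_mem (ih z hz hxz) <| Submodule.mem_iSup_of_mem n <|
      f.apply_sub_mem_range_pow_inf_ker_pow hz hxz hz' hxz'

theorem map_upperMiddle_le_lowerMiddle (hf : IsNilpotent f) :
    f.upperMiddle.map f ≤ f.lowerMiddle := by
  obtain ⟨N, hN⟩ := hf
  rintro - ⟨x, hx, rfl⟩
  refine f.apply_mem_lowerMiddle_of_mem_upperMiddle hx N x ?_ ?_
  · simp [hN]
  · simp

end Module.End

theorem smul_upperMiddle_le_lowerMiddle_le_upperMiddle_general
    {R : Type*} [CommRing R]
    (π : R)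
    (T : Type*) [AddCommGroup T] [Module R T]
    (N : ℕ) (hT : ∀ t : T, π ^ N • t = 0) :
    π • (⨅ n : ℕ, (LinearMap.range (LinearMap.lsmul R T (π ^ n)) ⊔
          LinearMap.ker (LinearMap.lsmul R T (π ^ n)))) ≤
      (⨆ n : ℕ, (LinearMap.range (LinearMap.lsmul R T (π ^ n)) ⊓
          LinearMap.ker (LinearMap.lsmul R T (π ^ n)))) ∧
    (⨆ n : ℕ, (LinearMap.range (LinearMap.lsmul R T (π ^ n)) ⊓
          LinearMap.ker (LinearMap.lsmul R T (π ^ n)))) ≤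
      (⨅ n : ℕ, (LinearMap.range (LinearMap.lsmul R T (π ^ n)) ⊔
          LinearMap.ker (LinearMap.lsmul R T (π ^ n)))) := by
  set f : Module.End R T := LinearMap.lsmul R T π
  have hpow (n : ℕ) : LinearMap.lsmul R T (π ^ n) = f ^ n :=
    map_pow (Module.toModuleEnd R T) π n
  have hnil : IsNilpotent f := ⟨N, by rw [← hpow]; ext t; exact hT t⟩
  simp only [hpow, Submodule.pointwise_smul_def]
  exact ⟨f.map_upperMiddle_le_lowerMiddle hnil, f.lowerMiddle_le_upperMiddle⟩

/-- For an `R`-module `T` killed by `πᴺ` (`N ≥ 1`), with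
`m₋(T) = ∑_{n≥0} (Im πⁿ ∩ Ker πⁿ)` and `m₊(T) = ⋂_{n≥0} (Im πⁿ + Ker πⁿ)`,
one has `π·m₊(T) ⊆ m₋(T) ⊆ m₊(T)`. -/
theorem smul_upperMiddle_le_lowerMiddle_le_upperMiddle
    {R : Type*} [CommRing R] [IsDomain R] [IsDiscreteValuationRing R]
    (π : R) (hπ : Irreducible π)
    (T : Type*) [AddCommGroup T] [Module R T]
    (N : ℕ) (hN : 1 ≤ N) (hT : ∀ t : T, π ^ N • t = 0) :
    π • (⨅ n : ℕ, (LinearMap.range (LinearMap.lsmul R T (π ^ n)) ⊔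
          LinearMap.ker (LinearMap.lsmul R T (π ^ n)))) ≤
      (⨆ n : ℕ, (LinearMap.range (LinearMap.lsmul R T (π ^ n)) ⊓
          LinearMap.ker (LinearMap.lsmul R T (π ^ n)))) ∧
    (⨆ n : ℕ, (LinearMap.range (LinearMap.lsmul R T (π ^ n)) ⊓
          LinearMap.ker (LinearMap.lsmul R T (π ^ n)))) ≤
      (⨅ n : ℕ, (LinearMap.range (LinearMap.lsmul R T (π ^ n)) ⊔
          LinearMap.ker (LinearMap.lsmul R T (π ^ n)))) :=
  smul_upperMiddle_le_lowerMiddle_le_upperMiddle_general π T N hT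
end

section
/- Let A be an R-algebra acting R-linearly on a finite-dimensional K-vector space V (R a DVR with fraction field K). Then there exists an A-stable lattice of V if and only if the image of A in End_K(V) is a finitely generated R-module. -/
/-!
If `L` is a lattice, restricting to `L` embeds the `R`-module of `K`-endomorphisms preserving `L`
into `End_R(L)`, which is a Noetherian `R`-module; so the image of `A` is finitely generated.
Conversely, if the image `M` of `A` is finitely generated, then applying `M` to the `R`-span of a
finite `K`-spanning set gives a finitely generated `R`-module, spanning since `1 ∈ M` and
`A`-stable since `M` is closed under left multiplication by `ρ(A)`.
-/

namespace Submodule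

variable {R K V : Type*} [CommRing R] [CommRing K] [Algebra R K]
  [AddCommGroup V] [Module K V] [Module R V] [IsScalarTower R K V]

theorem fg_of_forall_mapsTo_lattice [IsNoetherianRing R] {L : Submodule R V} (hL : L.FG)
    (hspan : span K (L : Set V) = ⊤) {M : Submodule R (Module.End K V)}
    (hM : ∀ f ∈ M, ∀ x ∈ L, f x ∈ L) : M.FG := by
  have : Module.Finite R L := Module.Finite.iff_fg.mpr hL
  let restrictToL : Module.End K V →ₗ[R] L →ₗ[R] V :=
    LinearMap.lcomp R V L.subtype ∘ₗ LinearMap.restrictScalarsₗ R K V V R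
  have hinj : Function.Injective restrictToL := by
    intro f g hfg
    refine LinearMap.ext_on (s := (L : Set V)) hspan fun x hx => ?_
    exact LinearMap.congr_fun hfg ⟨x, hx⟩
  let extendToV : (L →ₗ[R] L) →ₗ[R] L →ₗ[R] V := LinearMap.compRight R L.subtype
  have hle : M.map restrictToL ≤ LinearMap.range extendToV := by
    rintro _ ⟨f, hf, rfl⟩
    exact ⟨(f.restrictScalars R).restrict (hM f hf), rfl⟩
  exact fg_of_fg_map_injective restrictToL hinj (isNoetherian_submodule.mp inferInstance _ hle)

variable (M : Submodule R (Module.End K V)) (N : Submodule R V)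

theorem le_map₂_restrictScalarsₗ_of_one_mem (h1 : 1 ∈ M) :
    N ≤ map₂ (LinearMap.restrictScalarsₗ R K V V R) M N :=
  fun _ hx => apply_mem_map₂ _ h1 hx

theorem mapsTo_map₂_restrictScalarsₗ {f : Module.End K V} (hf : ∀ g ∈ M, f * g ∈ M) :
    ∀ x ∈ map₂ (LinearMap.restrictScalarsₗ R K V V R) M N,
      f x ∈ map₂ (LinearMap.restrictScalarsₗ R K V V R) M N := by
  suffices map₂ (LinearMap.restrictScalarsₗ R K V V R) M N ≤
      (map₂ (LinearMap.restrictScalarsₗ R K V V R) M N).comap (f.restrictScalars R) from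
    fun x hx => this hx
  exact map₂_le.mpr fun g hg v hv => apply_mem_map₂ (m := f * g) _ (hf g hg) hv

theorem exists_lattice_forall_mapsTo [Module.Finite K V] (hM : M.FG) (h1 : 1 ∈ M) :
    ∃ L : Submodule R V, L.FG ∧ span K (L : Set V) = ⊤ ∧
      ∀ f : Module.End K V, (∀ g ∈ M, f * g ∈ M) → ∀ x ∈ L, f x ∈ L := by
  obtain ⟨s, hs⟩ := Module.Finite.fg_top (R := K) (M := V)
  refine ⟨map₂ (LinearMap.restrictScalarsₗ R K V V R) M (span R s),
    hM.map₂ _ (fg_span s.finite_toSet), ?_, fun f hf => mapsTo_map₂_restrictScalarsₗ M _ hf⟩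
  refine top_unique (hs ▸ span_le.mpr fun x hx => subset_span ?_)
  exact le_map₂_restrictScalarsₗ_of_one_mem M _ h1 (subset_span hx)

end Submodule

theorem exists_stable_lattice_iff_fg_general
    {R K V A : Type*} [CommRing R] [IsDomain R] [IsDiscreteValuationRing R]
    [Field K] [Algebra R K]
    [AddCommGroup V] [Module K V] [Module R V] [IsScalarTower R K V]
    [FiniteDimensional K V]
    [Ring A] [Algebra R A]
    (ρ : A →ₐ[R] Module.End K V) :
    (∃ L : Submodule R V, L.FG ∧ Submodule.span K (L : Set V) = ⊤ ∧
        ∀ (a : A), ∀ x ∈ L, ρ a x ∈ L) ↔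
      (LinearMap.range ρ.toLinearMap).FG := by
  constructor
  · rintro ⟨L, hL, hspan, hstable⟩
    refine Submodule.fg_of_forall_mapsTo_lattice hL hspan ?_
    rintro _ ⟨a, rfl⟩
    exact hstable a
  · intro hfg
    obtain ⟨L, hL, hspan, hstable⟩ :=
      Submodule.exists_lattice_forall_mapsTo _ hfg ⟨1, map_one ρ⟩
    refine ⟨L, hL, hspan, fun a => hstable (ρ a) ?_⟩
    rintro _ ⟨c, rfl⟩
    exact ⟨a * c, map_mul ρ a c⟩

/-- Let `A` be an `R`-algebra acting `R`-linearly (via an `R`-algebra homomorphism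
`ρ : A → End_K(V)`) on a finite-dimensional `K`-vector space `V`, where `R` is a DVR with
fraction field `K`. There exists an `A`-stable lattice of `V` if and only if the image
of `A` in `End_K(V)` is a finitely generated `R`-module. -/
theorem exists_stable_lattice_iff_fg
    {R K V A : Type*} [CommRing R] [IsDomain R] [IsDiscreteValuationRing R]
    [Field K] [Algebra R K] [IsFractionRing R K]
    [AddCommGroup V] [Module K V] [Module R V] [IsScalarTower R K V]
    [FiniteDimensional K V]
    [Ring A] [Algebra R A]
    (ρ : A →ₐ[R] Module.End K V) :
    (∃ L : Submodule R V, L.FG ∧ Submodule.span K (L : Set V) = ⊤ ∧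
        ∀ (a : A), ∀ x ∈ L, ρ a x ∈ L) ↔
      (LinearMap.range ρ.toLinearMap).FG :=
  exists_stable_lattice_iff_fg_general ρ
end

section
/- Let char(k) ≠ 2, B a nondegenerate symmetric bilinear form on V with quadratic form q(x) = B(x,x), and M any lattice of V. Then there exists an orthogonal decomposition V = ⊕ᵢ Vᵢ into one-dimensional subspaces (B(Vᵢ, Vⱼ) = 0 for i ≠ j) such that M = ⊕ᵢ (M ∩ Vᵢ). -/
variable {R K V : Type*} [CommRing R] [IsDomain R] [IsDiscreteValuationRing R]
  [Field K] [Algebra R K] [IsFractionRing R K]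
  [AddCommGroup V] [Module K V] [Module R V] [IsScalarTower R K V]
  [FiniteDimensional K V]

/-!
Induction on the dimension. Because `2` is a unit, all values of `B` on `M` are `R`-multiples of
a single norm `B z z` with `z ∈ M`: among the finitely many values `B sᵢ sⱼ` on generators of `M`
pick `c = B x y` of largest valuation; by polarization `2c = B(x+y,x+y) - B(x,x) - B(y,y)`, so one
of these three norms has valuation at least that of `c`. Nondegeneracy makes `z` anisotropic, and
the coefficient `B z m / B z z` of the projection `m ↦ m - (B z m / B z z) • z` along `z` is
integral for `m ∈ M`, so `M = R z ⊕ π(M)` with `π(M)` a lattice in `z^⊥`. By induction `M` has an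
`R`-basis which is a `B`-orthogonal `K`-basis of `V`; its lines are the `Vᵢ`.
-/

open Module
open LinearMap (BilinForm)
open Submodule (span mem_span_singleton)

namespace ValuationRing

variable (A L : Type*) [CommRing A] [IsDomain A] [ValuationRing A] [Field L] [Algebra A L]
  [IsFractionRing A L]

theorem integers_valuation : (valuation A L).Integers A :=
  ⟨IsFractionRing.injective A L,
    fun a => (Valuation.mem_integer_iff _ _).1 ((mem_integer_iff A L _).2 ⟨a, rfl⟩),
    fun r hr => (mem_integer_iff A L r).1 hr⟩

variable {A L}

theorem mem_span_singleton_of_valuation_le {a b : L}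
    (h : valuation A L a ≤ valuation A L b) : a ∈ A ∙ b := by
  rcases eq_or_ne b 0 with rfl | hb
  · simp_all
  obtain ⟨r, hr⟩ := (integers_valuation A L).exists_of_le_one (r := a / b)
    (by rw [map_div₀]; exact div_le_one_of_le₀ h zero_le)
  exact mem_span_singleton.2 ⟨r, by rw [Algebra.smul_def, hr, div_mul_cancel₀ a hb]⟩

theorem valuation_two_eq_one (h2 : IsUnit (2 : A)) : valuation A L 2 = 1 := by
  simpa only [map_ofNat] using (integers_valuation A L).one_of_isUnit h2

end ValuationRing

theorem isUnit_two_of_ringChar_residueField_ne_two {R : Type*} [CommRing R] [IsLocalRing R]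
    (hk : ringChar (IsLocalRing.ResidueField R) ≠ 2) : IsUnit (2 : R) := by
  rw [← IsLocalRing.notMem_maximalIdeal, ← IsLocalRing.residue_eq_zero_iff, map_ofNat]
  exact Ring.two_ne_zero hk

theorem IsLattice.map {A L E F : Type*} [CommRing A] [Field L] [Algebra A L]
    [AddCommGroup E] [Module L E] [Module A E] [IsScalarTower A L E]
    [AddCommGroup F] [Module L F] [Module A F] [IsScalarTower A L F]
    {M : Submodule A E} (hM : IsLattice L M) (f : E →ₗ[L] F) (hf : Function.Surjective f) :
    IsLattice L (M.map (f.restrictScalars A)) :=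
  ⟨hM.1.map _, by
    rw [Submodule.map_coe, LinearMap.coe_restrictScalars, Submodule.span_image, hM.2,
      Submodule.map_top, LinearMap.range_eq_top.2 hf]⟩

theorem Module.Basis.isInternal_span_singleton_s18 {ι L E : Type*} [DecidableEq ι] [Field L]
    [AddCommGroup E] [Module L E] (b : Basis ι L E) :
    DirectSum.IsInternal fun i => L ∙ b i :=
  DirectSum.isInternal_submodule_of_iSupIndep_of_iSup_eq_top
    b.linearIndependent.iSupIndep_span_singleton
    (by rw [← Submodule.span_range_eq_iSup, b.span_eq])

namespace LinearMap.BilinForm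

variable {L E : Type*} [Field L] [AddCommGroup E] [Module L E]

theorem eq_zero_of_span_eq_top {B : BilinForm L E} {s : Set E} (hs : span L s = ⊤)
    (h : ∀ x ∈ s, ∀ y ∈ s, B x y = 0) : B = 0 :=
  LinearMap.ext_on hs fun x hx => LinearMap.ext_on hs fun y hy => h x hx y hy

theorem iIsOrtho_finCons {B : BilinForm L E} (hB : B.IsRefl) {n : ℕ} {x : E} {v : Fin n → E}
    (hv : B.iIsOrtho v) (hx : ∀ i, B x (v i) = 0) :
    B.iIsOrtho (Fin.cons x v : Fin (n + 1) → E) := by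
  intro i j hij
  induction i using Fin.cases <;> induction j using Fin.cases
  · exact absurd rfl hij
  · exact hx _
  · exact hB _ _ (hx _)
  · exact hv (fun h => hij (congrArg _ h))

theorem mem_orthogonal_span_singleton_iff {B : BilinForm L E} {x v : E} :
    v ∈ B.orthogonal (L ∙ x) ↔ B x v = 0 := by
  rw [orthogonal_span_singleton_eq_toLin_ker]
  rfl

variable (B : BilinForm L E) (x : E)

noncomputable def projOrthogonal : E →ₗ[L] E :=
  LinearMap.id - ((B x x)⁻¹ • B x).smulRight x

theorem projOrthogonal_apply (v : E) : B.projOrthogonal x v = v - (B x v / B x x) • x := by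
  simp [projOrthogonal, div_eq_inv_mul]

variable {B x}

theorem projOrthogonal_mem_orthogonal (hx : B x x ≠ 0) (v : E) :
    B.projOrthogonal x v ∈ B.orthogonal (L ∙ x) := by
  rw [mem_orthogonal_span_singleton_iff, projOrthogonal_apply]
  simp [hx]

theorem projOrthogonal_apply_of_mem_orthogonal {v : E} (hv : v ∈ B.orthogonal (L ∙ x)) :
    B.projOrthogonal x v = v := by
  rw [mem_orthogonal_span_singleton_iff] at hv
  simp [projOrthogonal_apply, hv]

theorem eq_span_singleton_sup_map_projOrthogonal {A : Type*} [CommRing A] [Algebra A L]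
    [Module A E] [IsScalarTower A L E] {M : Submodule A E} (hxM : x ∈ M) (hx : B x x ≠ 0)
    (hM : ∀ m ∈ M, B x m ∈ A ∙ B x x) :
    M = (A ∙ x) ⊔ M.map ((B.projOrthogonal x).restrictScalars A) := by
  have key : ∀ m ∈ M, ∃ r : A, B.projOrthogonal x m = m - r • x := by
    intro m hm
    obtain ⟨r, hr⟩ := mem_span_singleton.1 (hM m hm)
    refine ⟨r, ?_⟩
    rw [projOrthogonal_apply, ← hr, Algebra.smul_def, mul_div_cancel_right₀ _ hx,
      algebraMap_smul]
  refine le_antisymm (fun m hm => ?_)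
    (sup_le ((Submodule.span_singleton_le_iff_mem _ _).2 hxM) ?_)
  · obtain ⟨r, hr⟩ := key m hm
    exact Submodule.mem_sup.2 ⟨r • x, mem_span_singleton.2 ⟨r, rfl⟩, _,
      Submodule.mem_map_of_mem hm, by simp [hr]⟩
  · rintro _ ⟨m, hm, rfl⟩
    obtain ⟨r, hr⟩ := key m hm
    simpa [hr] using M.sub_mem hm (M.smul_mem r hxM)

end LinearMap.BilinForm

section

variable {A L E : Type*} [CommRing A] [IsDomain A] [ValuationRing A] [Field L] [Algebra A L]
  [IsFractionRing A L] [AddCommGroup E] [Module L E] [Module A E] [IsScalarTower A L E]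

namespace LinearMap.BilinForm

theorem exists_forall_apply_mem_span_singleton_apply (B : BilinForm L E)
    {s : Finset E} (hs : s.Nonempty) :
    ∃ x ∈ s, ∃ y ∈ s, ∀ m ∈ span A (s : Set E), ∀ m' ∈ span A (s : Set E),
      B m m' ∈ A ∙ B x y := by
  obtain ⟨⟨x, y⟩, hxy, hmax⟩ := (s ×ˢ s).exists_max_image
    (fun p => ValuationRing.valuation A L (B p.1 p.2)) (hs.product hs)
  rw [Finset.mem_product] at hxy
  have : Submodule.map₂ (B.restrictScalars₁₂ A A) (span A s) (span A s) ≤ A ∙ B x y := by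
    rw [Submodule.map₂_span_span, Submodule.span_le]
    rintro _ ⟨a, ha, b, hb, rfl⟩
    exact ValuationRing.mem_span_singleton_of_valuation_le
      (hmax (a, b) (Finset.mem_product.2 ⟨ha, hb⟩))
  exact ⟨x, hxy.1, y, hxy.2, fun m hm m' hm' => this (Submodule.apply_mem_map₂ _ hm hm')⟩

theorem IsSymm.exists_forall_apply_mem_span_apply_self (h2 : IsUnit (2 : A))
    {B : BilinForm L E} (hB : B.IsSymm) {M : Submodule A E} (hM : M.FG) :
    ∃ z ∈ M, ∀ m ∈ M, ∀ m' ∈ M, B m m' ∈ A ∙ B z z := by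
  obtain ⟨s, rfl⟩ := hM
  rcases s.eq_empty_or_nonempty with rfl | hs
  · exact ⟨0, zero_mem _, fun m hm m' _ => by simp_all⟩
  obtain ⟨x, hx, y, hy, hvalues⟩ := B.exists_forall_apply_mem_span_singleton_apply (A := A) hs
  set v := ValuationRing.valuation A L
  suffices ∃ z ∈ span A (s : Set E), v (B x y) ≤ v (B z z) by
    obtain ⟨z, hz, h⟩ := this
    exact ⟨z, hz, fun m hm m' hm' => (Submodule.span_singleton_le_iff_mem _ _).2
      (ValuationRing.mem_span_singleton_of_valuation_le h) (hvalues m hm m' hm')⟩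
  have hpolar : v (B x y) ≤ max (max (v (B (x + y) (x + y))) (v (B x x))) (v (B y y)) := by
    calc v (B x y) = v (B (x + y) (x + y) - B x x - B y y) := by
          rw [← one_mul (v (B x y)), ← ValuationRing.valuation_two_eq_one h2, ← map_mul]
          congr 1
          simp only [map_add, LinearMap.add_apply, hB.eq y x]
          ring
      _ ≤ _ := (v.map_sub _ _).trans (max_le_max_right _ (v.map_sub _ _))
  have hxs : x ∈ span A (s : Set E) := Submodule.subset_span hx
  have hys : y ∈ span A (s : Set E) := Submodule.subset_span hy
  rcases le_max_iff.1 hpolar with h | h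
  · rcases le_max_iff.1 h with h | h
    · exact ⟨_, add_mem hxs hys, h⟩
    · exact ⟨_, hxs, h⟩
  · exact ⟨_, hys, h⟩

theorem exists_apply_self_ne_zero_of_isLattice [Nontrivial E]
    (h2 : IsUnit (2 : A)) {B : BilinForm L E} (hB : B.IsSymm) (hnd : B.SeparatingLeft)
    {M : Submodule A E} (hM : IsLattice L M) :
    ∃ z ∈ M, B z z ≠ 0 ∧ ∀ m ∈ M, ∀ m' ∈ M, B m m' ∈ A ∙ B z z := by
  obtain ⟨z, hzM, hz⟩ := hB.exists_forall_apply_mem_span_apply_self h2 hM.1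
  refine ⟨z, hzM, fun h0 => ?_, hz⟩
  have hB0 : B = 0 :=
    eq_zero_of_span_eq_top hM.2 fun m hm m' hm' => by simpa [h0] using hz m hm m' hm'
  obtain ⟨w, hw⟩ := exists_ne (0 : E)
  exact hw (hnd w fun w' => by simp [hB0])

theorem exists_iIsOrtho_basis_span_eq_of_isLattice [FiniteDimensional L E]
    (h2 : IsUnit (2 : A)) {n : ℕ} (hn : finrank L E = n) {B : BilinForm L E} (hB : B.IsSymm)
    (hnd : B.Nondegenerate) {M : Submodule A E} (hM : IsLattice L M) :
    ∃ b : Basis (Fin n) L E, B.iIsOrtho b ∧ span A (Set.range b) = M := by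
  induction n generalizing E with
  | zero =>
    have : Subsingleton E := finrank_zero_iff.1 hn
    exact ⟨(finBasis L E).reindex (finCongr hn), fun i => i.elim0, Subsingleton.elim _ _⟩
  | succ n ih =>
    have : Nontrivial E := finrank_pos_iff (R := L).1 (by omega)
    obtain ⟨x, hxM, hxx, hx⟩ := exists_apply_self_ne_zero_of_isLattice h2 hB hnd.1 hM
    have hU : finrank L (B.orthogonal (L ∙ x)) = n := by
      have := Submodule.finrank_add_eq_of_isCompl (isCompl_span_singleton_orthogonal hxx)
      rw [finrank_span_singleton fun h => hxx (by simp [h]), hn] at this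
      omega
    set U := B.orthogonal (L ∙ x)
    have hndU := B.restrict_nondegenerate_orthogonal_spanSingleton hnd hB.isRefl hxx
    let P : E →ₗ[L] U := (B.projOrthogonal x).codRestrict U (projOrthogonal_mem_orthogonal hxx)
    have hP : Function.Surjective P := fun u =>
      ⟨u, Subtype.ext (projOrthogonal_apply_of_mem_orthogonal u.2)⟩
    obtain ⟨b', hb'o, hb'M⟩ := ih hU (hB.restrict U) hndU (hM.map P hP)
    let b : Fin (n + 1) → E := Fin.cons x (U.subtype ∘ b')
    have hbo : B.iIsOrtho b := iIsOrtho_finCons hB.isRefl (fun i j hij => hb'o hij)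
      fun i => mem_orthogonal_span_singleton_iff.1 (b' i).2
    have hli : LinearIndependent L b := linearIndependent_of_iIsOrtho hbo <|
      Fin.cases hxx fun i => hb'o.not_isOrtho_basis_self_of_nondegenerate hndU i
    refine ⟨basisOfLinearIndependentOfCardEqFinrank hli (by simp [hn]), ?_, ?_⟩
    · rwa [coe_basisOfLinearIndependentOfCardEqFinrank]
    · have hmap : M.map ((B.projOrthogonal x).restrictScalars A) =
          (span A (Set.range b')).map (U.subtype.restrictScalars A) := by
        rw [hb'M, ← Submodule.map_comp]
        rfl
      rw [coe_basisOfLinearIndependentOfCardEqFinrank, Fin.range_cons, Submodule.span_insert,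
        B.eq_span_singleton_sup_map_projOrthogonal hxM hxx (hx x hxM), hmap, Submodule.map_span,
        ← Set.range_comp]
      rfl

end LinearMap.BilinForm

end

/-- If `char k ≠ 2` (`k` the residue field of `R`), `B` a nondegenerate symmetric bilinear
form on `V` and `M` any lattice, there is an orthogonal decomposition `V = ⊕ᵢ Vᵢ` into
one-dimensional subspaces which is compatible with `M`. -/
theorem exists_orthogonal_splitting
    (hk : ringChar (IsLocalRing.ResidueField R) ≠ 2)
    (B : V →ₗ[K] V →ₗ[K] K)
    (hsymm : ∀ x y : V, B x y = B y x)
    (hnd : ∀ x : V, (∀ y : V, B x y = 0) → x = 0)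
    (M : Submodule R V) (hM : IsLattice K M) :
    ∃ W : Fin (Module.finrank K V) → Submodule K V,
      DirectSum.IsInternal W ∧
      (∀ i, Module.finrank K (W i) = 1) ∧
      (∀ i j, i ≠ j → ∀ x ∈ W i, ∀ y ∈ W j, B x y = 0) ∧
      M = ⨆ i, (M ⊓ (W i).restrictScalars R) := by
  have hB : LinearMap.BilinForm.IsSymm B := ⟨hsymm⟩
  obtain ⟨b, hbo, hbM⟩ := LinearMap.BilinForm.exists_iIsOrtho_basis_span_eq_of_isLattice
    (isUnit_two_of_ringChar_residueField_ne_two hk) rfl hB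
    (hB.isRefl.nondegenerate_iff_separatingLeft.2 hnd) hM
  refine ⟨fun i => K ∙ b i, b.isInternal_span_singleton_s18,
    fun i => finrank_span_singleton (b.ne_zero i), fun i j hij x hx y hy => ?_,
    le_antisymm ?_ (iSup_le fun i => inf_le_left)⟩
  · obtain ⟨c, rfl⟩ := mem_span_singleton.1 hx
    obtain ⟨d, rfl⟩ := mem_span_singleton.1 hy
    simp [show B (b i) (b j) = 0 from hbo hij]
  · have hbM' : ∀ i, b i ∈ M := fun i => hbM ▸ Submodule.subset_span ⟨i, rfl⟩
    conv_lhs => rw [← hbM, Submodule.span_range_eq_iSup]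
    exact iSup_mono fun i => (Submodule.span_singleton_le_iff_mem _ _).2
      ⟨hbM' i, Submodule.mem_span_singleton_self _⟩
end
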